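/- Let τ be a finite vocabulary, n a natural number, and N, P τ-structures. Then every Σ⁰_{n+1} sentence true in N is true in P if and only if there exist a τ-structure R that is an elementary extension of P and an embedding f of N into R such that the image of f is a Σ⁰_n-elementary substructure of R (i.e. for every Σ⁰_n formula φ(x₁,…,x_r) and every r-tuple ā from N, R ⊨ φ(f(ā)) if and only if N ⊨ φ(ā)). -/

import Mathlib

/-!
Preservation theorems generalizing the Łoś–Tarski theorem
(Sankaran, Adsul, Chakraborty).

Conventions: a vocabulary is a `FirstOrder.Language`; following classical
model theory, all structures (and all substructures considered) are nonempty.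
-/

namespace LTGen

open FirstOrder FirstOrder.Language

universe u v w

variable {L : FirstOrder.Language.{u, v}}

/-- Existentially quantify the last `m` de Bruijn variables of a bounded formula. -/
def exsN {α : Type*} : ∀ (m : ℕ) {n : ℕ}, L.BoundedFormula α (n + m) → L.BoundedFormula α n
  | 0, _, φ => φ
  | m + 1, _, φ => exsN m φ.ex

/-- Universally quantify the last `m` de Bruijn variables of a bounded formula. -/
def allsN {α : Type*} : ∀ (m : ℕ) {n : ℕ}, L.BoundedFormula α (n + m) → L.BoundedFormula α n
  | 0, _, φ => φ
  | m + 1, _, φ => allsN m φ.all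

/-- `σ` is a prenex sentence `∃x₁…x_k ∀y₁…y_m ψ` with `ψ` quantifier-free:
a Σ⁰₂ sentence with exactly `k` existential quantifiers followed only by
universal quantifiers. -/
def IsExUnivSentence (k : ℕ) (σ : L.Sentence) : Prop :=
  ∃ (m : ℕ) (ψ : L.BoundedFormula Empty (0 + k + m)), ψ.IsQF ∧ σ = exsN k (allsN m ψ)

/-- `σ` is a prenex sentence `∀x₁…x_k ∃y₁…y_m ψ` with `ψ` quantifier-free:
a Π⁰₂ sentence with exactly `k` universal quantifiers followed only by
existential quantifiers. -/
def IsUnivExSentence (k : ℕ) (σ : L.Sentence) : Prop :=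
  ∃ (m : ℕ) (ψ : L.BoundedFormula Empty (0 + k + m)), ψ.IsQF ∧ σ = allsN k (exsN m ψ)

/-- `σ` is a universal (Π⁰₁) sentence `∀x₁…x_m ψ` with `ψ` quantifier-free. -/
def IsPi1Sentence (σ : L.Sentence) : Prop :=
  ∃ (m : ℕ) (ψ : L.BoundedFormula Empty (0 + m)), ψ.IsQF ∧ σ = allsN m ψ

/-- The sentence `φ` is preserved under substructures modulo `k`-sized cores
(`φ ∈ PSC(k)`): every model `M` of `φ` has a subset `C` of its universe of size
at most `k` such that every substructure of `M` whose universe contains `C`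
is a model of `φ`. -/
def SentenceInPSC (k : ℕ) (φ : L.Sentence) : Prop :=
  ∀ (M : Type w) [L.Structure M] [Nonempty M], M ⊨ φ →
    ∃ C : Finset M, C.card ≤ k ∧
      ∀ N : L.Substructure M, ↑C ⊆ (N : Set M) → Nonempty ↥N → ↥N ⊨ φ

/-- The sentence `φ` is preserved under substructures modulo a finite core
(`φ ∈ PSC_f`). -/
def SentenceInPSCf (φ : L.Sentence) : Prop :=
  ∀ (M : Type w) [L.Structure M] [Nonempty M], M ⊨ φ →
    ∃ C : Finset M,
      ∀ N : L.Substructure M, ↑C ⊆ (N : Set M) → Nonempty ↥N → ↥N ⊨ φ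

/-- `R` is a `k`-ary cover of `M` (equivalently, `M` is a `k`-ary covered
extension of the non-empty collection `R` of substructures of `M`): every
subset of the universe of `M` of size at most `k` is contained in the universe
of some member of `R`. -/
def KaryCover (k : ℕ) {M : Type w} [L.Structure M] (R : Set (L.Substructure M)) : Prop :=
  R.Nonempty ∧ ∀ C : Finset M, C.card ≤ k → ∃ N ∈ R, (C : Set M) ⊆ (N : Set M)

/-- `R` is a finitary cover of `M` (equivalently, `M` is a finitary covered
extension of `R`): every finite subset of the universe of `M` is contained in
the universe of some member of `R`. -/
def FinitaryCover {M : Type w} [L.Structure M] (R : Set (L.Substructure M)) : Prop :=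
  R.Nonempty ∧ ∀ C : Finset M, ∃ N ∈ R, (C : Set M) ⊆ (N : Set M)

/-- The sentence `φ` is preserved under `k`-ary covered extensions
(`φ ∈ PCE(k)`). -/
def SentenceInPCE (k : ℕ) (φ : L.Sentence) : Prop :=
  ∀ (M : Type w) [L.Structure M] [Nonempty M] (R : Set (L.Substructure M)),
    KaryCover k R → (∀ N ∈ R, Nonempty ↥N ∧ ↥N ⊨ φ) → M ⊨ φ

/-- The sentence `φ` is preserved under finitary covered extensions
(`φ ∈ PCE_f`). -/
def SentenceInPCEf (φ : L.Sentence) : Prop :=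
  ∀ (M : Type w) [L.Structure M] [Nonempty M] (R : Set (L.Substructure M)),
    FinitaryCover R → (∀ N ∈ R, Nonempty ↥N ∧ ↥N ⊨ φ) → M ⊨ φ

/-- The theory `T` is preserved under substructures modulo `k`-sized cores
(`T ∈ PSC(k)`). -/
def TheoryInPSC (k : ℕ) (T : L.Theory) : Prop :=
  ∀ (M : Type w) [L.Structure M] [Nonempty M], M ⊨ T →
    ∃ C : Finset M, C.card ≤ k ∧
      ∀ N : L.Substructure M, ↑C ⊆ (N : Set M) → Nonempty ↥N → ↥N ⊨ T

/-- The theory `T` is preserved under substructures modulo a finite core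
(`T ∈ PSC_f`). -/
def TheoryInPSCf (T : L.Theory) : Prop :=
  ∀ (M : Type w) [L.Structure M] [Nonempty M], M ⊨ T →
    ∃ C : Finset M,
      ∀ N : L.Substructure M, ↑C ⊆ (N : Set M) → Nonempty ↥N → ↥N ⊨ T

/-- The theory `T` is preserved under `k`-ary covered extensions
(`T ∈ PCE(k)`). -/
def TheoryInPCE (k : ℕ) (T : L.Theory) : Prop :=
  ∀ (M : Type w) [L.Structure M] [Nonempty M] (R : Set (L.Substructure M)),
    KaryCover k R → (∀ N ∈ R, Nonempty ↥N ∧ ↥N ⊨ T) → M ⊨ T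

/-- The theory `T` is preserved under finitary covered extensions
(`T ∈ PCE_f`). -/
def TheoryInPCEf (T : L.Theory) : Prop :=
  ∀ (M : Type w) [L.Structure M] [Nonempty M] (R : Set (L.Substructure M)),
    FinitaryCover R → (∀ N ∈ R, Nonempty ↥N ∧ ↥N ⊨ T) → M ⊨ T

/-- A class `S` of `τ`-structures is preserved under substructures modulo
`k`-sized cores (`S ∈ PSC(k)`). -/
def ClassInPSC (k : ℕ) (S : ∀ M : Type w, L.Structure M → Prop) : Prop :=
  ∀ (M : Type w) [str : L.Structure M] [Nonempty M], S M str →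
    ∃ C : Finset M, C.card ≤ k ∧
      ∀ N : L.Substructure M, ↑C ⊆ (N : Set M) → Nonempty ↥N → S ↥N inferInstance

/-- A class `S` of `τ`-structures is preserved under substructures modulo a
finite core (`S ∈ PSC_f`). -/
def ClassInPSCf (S : ∀ M : Type w, L.Structure M → Prop) : Prop :=
  ∀ (M : Type w) [str : L.Structure M] [Nonempty M], S M str →
    ∃ C : Finset M,
      ∀ N : L.Substructure M, ↑C ⊆ (N : Set M) → Nonempty ↥N → S ↥N inferInstance

/-- A class `S` of `τ`-structures is preserved under `k`-ary covered
extensions (`S ∈ PCE(k)`). -/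
def ClassInPCE (k : ℕ) (S : ∀ M : Type w, L.Structure M → Prop) : Prop :=
  ∀ (M : Type w) [str : L.Structure M] [Nonempty M] (R : Set (L.Substructure M)),
    KaryCover k R → (∀ N ∈ R, Nonempty ↥N ∧ S ↥N inferInstance) → S M str

/-- A class `S` of `τ`-structures is preserved under finitary covered
extensions (`S ∈ PCE_f`). -/
def ClassInPCEf (S : ∀ M : Type w, L.Structure M → Prop) : Prop :=
  ∀ (M : Type w) [str : L.Structure M] [Nonempty M] (R : Set (L.Substructure M)),
    FinitaryCover R → (∀ N ∈ R, Nonempty ↥N ∧ S ↥N inferInstance) → S M str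

/-- `IsSigmaPi true N φ` says that `φ` is a Σ⁰_N formula: a prenex formula
whose quantifier prefix consists of `N` consecutive (possibly empty) blocks of
like quantifiers beginning with an existential block, with quantifier-free
matrix. `IsSigmaPi false N φ` says that `φ` is a Π⁰_N formula (first block
universal). `Σ⁰₀ = Π⁰₀ =` quantifier-free. The `n` de Bruijn variables of `φ`
are its free variables. -/
def IsSigmaPi : Bool → ℕ → ∀ {n : ℕ}, L.BoundedFormula Empty n → Prop
  | _, 0, _, φ => φ.IsQF
  | b, N + 1, n, φ =>
      ∃ (m : ℕ) (ψ : L.BoundedFormula Empty (n + m)),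
        IsSigmaPi (!b) N ψ ∧ φ = cond b (exsN m ψ) (allsN m ψ)

/-- The embedding `f : M ↪ N` is Σ⁰_n-elementary (its image is a
Σ⁰_n-elementary substructure of `N`): for every Σ⁰_n formula `φ(x₁,…,x_r)` and
every `r`-tuple `a` from `M`, `N ⊨ φ(f(a))` iff `M ⊨ φ(a)`. -/
def SigmaNElementary (nl : ℕ) {M N : Type*} [L.Structure M] [L.Structure N]
    (f : M ↪[L] N) : Prop :=
  ∀ (r : ℕ) (φ : L.BoundedFormula Empty r), IsSigmaPi true nl φ →
    ∀ a : Fin r → M,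
      (φ.Realize (fun x => x.elim) (f ∘ a) ↔ φ.Realize (fun x => x.elim) a)


/-- Witness for the generalized existential amalgamation theorem: `R` (with
structure `iR`) is an elementary extension of `P` (via some elementary
embedding) together with an embedding `f` of `N` into `R` whose image is a
Σ⁰_n-elementary substructure of `R`. -/
def ElemExtSigmaWitness (n : ℕ) (N P : Type w) [L.Structure N] [L.Structure P]
    (R : Type (max u v w)) (iR : L.Structure R) : Prop :=
  letI := iR
  Nonempty (P ↪ₑ[L] R) ∧ ∃ f : N ↪[L] R, SigmaNElementary n f

/-!
For `(⇐)`: a Σ⁰ₙ₊₁ sentence `∃ x̄, ψ(x̄)` with `ψ` a Π⁰ₙ formula, true in `N` at `ā`, holds in `R`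
at `f ā` because a Σ⁰ₙ-elementary embedding also preserves Π⁰ₙ formulas (negations of Σ⁰ₙ ones,
up to equivalence), and `R` is elementarily equivalent to `P`.

For `(⇒)`: by compactness, the elementary diagram of `P` together with all Σ⁰ₙ and Π⁰ₙ facts
`φ(ā)` true in `N` has a model `R`, where the constants naming `N` give the Σ⁰ₙ-elementary
embedding. A finite part of this theory is satisfied in `P`: finitely many such facts conjoin, up to
equivalence, to one Σ⁰ₙ₊₁ fact `χ(ā)` true in `N`, so `∃ x̄, χ(x̄) ∧ (xᵢ = xⱼ whenever aᵢ = aⱼ)` is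
a Σ⁰ₙ₊₁ sentence true in `N`, hence in `P`, and a witness in `P` interprets the constants.
-/

section BlockQuantifiers

open BoundedFormula

variable {α : Type*}

theorem realize_exsN {M : Type*} [L.Structure M] {t : ℕ} :
    ∀ {m : ℕ} (φ : L.BoundedFormula α (t + m)) (v : α → M) (xs : Fin t → M),
      (exsN m φ).Realize v xs ↔ ∃ a : Fin m → M, φ.Realize v (Fin.append xs a)
  | 0, φ, v, xs => by simp [exsN, Unique.exists_iff, Fin.append_right_nil _ _ rfl]
  | m + 1, φ, v, xs => by
    simp only [exsN, realize_exsN φ.ex, realize_ex, ← Fin.append_snoc]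
    exact ⟨fun ⟨a, x, h⟩ => ⟨_, h⟩,
      fun ⟨b, h⟩ => ⟨Fin.init b, b (Fin.last m), by rwa [Fin.snoc_init_self]⟩⟩

theorem realize_allsN {M : Type*} [L.Structure M] {t : ℕ} :
    ∀ {m : ℕ} (φ : L.BoundedFormula α (t + m)) (v : α → M) (xs : Fin t → M),
      (allsN m φ).Realize v xs ↔ ∀ a : Fin m → M, φ.Realize v (Fin.append xs a)
  | 0, φ, v, xs => by simp [allsN, Fin.append_right_nil _ _ rfl]
  | m + 1, φ, v, xs => by
    simp only [allsN, realize_allsN φ.all, realize_all, ← Fin.append_snoc]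
    exact ⟨fun h b => by simpa using h (Fin.init b) (b (Fin.last m)), fun h a x => h _⟩

theorem exsN_add {t : ℕ} : ∀ (m₁ : ℕ) {m₂ : ℕ} (φ : L.BoundedFormula α (t + m₂ + m₁)),
    exsN m₂ (exsN m₁ φ) = exsN (m₂ + m₁) (φ.castLE (Nat.add_assoc t m₂ m₁).le)
  | 0, _, φ => by simp [exsN]
  | m₁ + 1, _, φ => exsN_add m₁ φ.ex

theorem allsN_add {t : ℕ} : ∀ (m₁ : ℕ) {m₂ : ℕ} (φ : L.BoundedFormula α (t + m₂ + m₁)),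
    allsN m₂ (allsN m₁ φ) = allsN (m₂ + m₁) (φ.castLE (Nat.add_assoc t m₂ m₁).le)
  | 0, _, φ => by simp [allsN]
  | m₁ + 1, _, φ => allsN_add m₁ φ.all

theorem castLE_exsN {t s : ℕ} (h : t ≤ s) : ∀ (m : ℕ) (φ : L.BoundedFormula α (t + m)),
    (exsN m φ).castLE h = exsN m (φ.castLE (Nat.add_le_add_right h m))
  | 0, _ => rfl
  | m + 1, φ => castLE_exsN h m φ.ex

theorem castLE_allsN {t s : ℕ} (h : t ≤ s) : ∀ (m : ℕ) (φ : L.BoundedFormula α (t + m)),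
    (allsN m φ).castLE h = allsN m (φ.castLE (Nat.add_le_add_right h m))
  | 0, _ => rfl
  | m + 1, φ => castLE_allsN h m φ.all

theorem liftAt_exsN {t : ℕ} (k i : ℕ) : ∀ (m : ℕ) (φ : L.BoundedFormula α (t + m)),
    (exsN m φ).liftAt k i = exsN m ((φ.liftAt k i).castLE (by omega))
  | 0, φ => (castLE_rfl _ _).symm
  | m + 1, φ => by
    rw [exsN, liftAt_exsN k i m φ.ex, exsN]
    congr 1
    exact congrArg BoundedFormula.ex (castLE_castLE _ _ _)

theorem liftAt_allsN {t : ℕ} (k i : ℕ) : ∀ (m : ℕ) (φ : L.BoundedFormula α (t + m)),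
    (allsN m φ).liftAt k i = allsN m ((φ.liftAt k i).castLE (by omega))
  | 0, φ => (castLE_rfl _ _).symm
  | m + 1, φ => by
    rw [allsN, liftAt_allsN k i m φ.all, allsN]
    congr 1
    exact congrArg BoundedFormula.all (castLE_castLE _ _ _)

theorem realize_exsN_sentence {M : Type*} [L.Structure M] {r : ℕ}
    (φ : L.BoundedFormula Empty r) :
    M ⊨ exsN r (φ.castLE (Nat.zero_add r).ge) ↔ ∃ xs : Fin r → M, φ.Realize default xs := by
  simp [Sentence.Realize, Formula.Realize, realize_exsN,
    BoundedFormula.realize_castLE_of_eq (Nat.zero_add r).symm, Fin.append_left_nil _ _ rfl,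
    Function.comp_def]

end BlockQuantifiers

section Hierarchy

variable {b : Bool} {k t : ℕ}

theorem IsSigmaPi.of_isQF : ∀ {k : ℕ} (b : Bool) {φ : L.BoundedFormula Empty t},
    φ.IsQF → IsSigmaPi b k φ
  | 0, _, _, h => h
  | _ + 1, b, φ, h => ⟨0, φ, of_isQF (!b) h, by cases b <;> rfl⟩

theorem IsSigmaPi.succ_of_not {φ : L.BoundedFormula Empty t} (h : IsSigmaPi (!b) k φ) :
    IsSigmaPi b (k + 1) φ :=
  ⟨0, φ, h, by cases b <;> rfl⟩

theorem IsSigmaPi.succ : ∀ {k : ℕ} {b : Bool} {t : ℕ} {φ : L.BoundedFormula Empty t},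
    IsSigmaPi b k φ → IsSigmaPi b (k + 1) φ
  | 0, b, _, _, h => of_isQF b h
  | _ + 1, _, _, _, ⟨m, ψ, hψ, hφ⟩ => ⟨m, ψ, hψ.succ, hφ⟩

theorem IsSigmaPi.sigma_succ {φ : L.BoundedFormula Empty t} (h : IsSigmaPi b k φ) :
    IsSigmaPi true (k + 1) φ := by
  cases b
  exacts [h.succ_of_not (b := true), h.succ]

theorem IsSigmaPi.castLE : ∀ {k : ℕ} {b : Bool} {t s : ℕ} (h : t ≤ s)
    {φ : L.BoundedFormula Empty t}, IsSigmaPi b k φ → IsSigmaPi b k (φ.castLE h)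
  | 0, _, _, _, _, _, hφ => BoundedFormula.IsQF.castLE hφ
  | _ + 1, b, _, _, h, _, ⟨m, ψ, hψ, hφ⟩ => by
    refine ⟨m, _, hψ.castLE (Nat.add_le_add_right h m), ?_⟩
    cases b <;> simp only [hφ, cond_false, cond_true, castLE_allsN, castLE_exsN]

theorem IsSigmaPi.liftAt : ∀ {k : ℕ} {b : Bool} {t : ℕ} (n i : ℕ)
    {φ : L.BoundedFormula Empty t}, IsSigmaPi b k φ → IsSigmaPi b k (φ.liftAt n i)
  | 0, _, _, _, _, _, hφ => BoundedFormula.IsQF.liftAt hφ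
  | _ + 1, b, _, n, i, _, ⟨m, ψ, hψ, hφ⟩ => by
    refine ⟨m, _, (hψ.liftAt n i).castLE (by omega), ?_⟩
    cases b <;> simp only [hφ, cond_false, cond_true, liftAt_allsN, liftAt_exsN]

theorem isSigmaPi_exsN {j : ℕ} {φ : L.BoundedFormula Empty (t + j)}
    (h : IsSigmaPi true (k + 1) φ) : IsSigmaPi true (k + 1) (exsN j φ) := by
  obtain ⟨m, ψ, hψ, rfl⟩ := h
  exact ⟨j + m, _, hψ.castLE _, exsN_add m ψ⟩

theorem isSigmaPi_allsN {j : ℕ} {φ : L.BoundedFormula Empty (t + j)}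
    (h : IsSigmaPi false (k + 1) φ) : IsSigmaPi false (k + 1) (allsN j φ) := by
  obtain ⟨m, ψ, hψ, rfl⟩ := h
  exact ⟨j + m, _, hψ.castLE _, allsN_add m ψ⟩

theorem IsSigmaPi.exists_iff_not : ∀ {k : ℕ} {b : Bool} {t : ℕ} {φ : L.BoundedFormula Empty t},
    IsSigmaPi b k φ → ∃ ψ, IsSigmaPi (!b) k ψ ∧ ψ ⇔[∅] φ.not
  | 0, _, _, φ, h => ⟨φ.not, h.not, Theory.Iff.refl _⟩
  | _ + 1, b, _, _, ⟨m, χ, hχ, rfl⟩ => by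
    obtain ⟨χ', hχ', hχ'χ⟩ := hχ.exists_iff_not
    refine ⟨cond b (allsN m χ') (exsN m χ'), ⟨m, χ', hχ', by cases b <;> rfl⟩, fun M v xs => ?_⟩
    have key := fun a : Fin m → M => hχ'χ.realize_bd_iff (v := v) (xs := Fin.append xs a)
    cases b <;> simp [BoundedFormula.realize_iff, realize_exsN, realize_allsN, key]

theorem IsSigmaPi.exists_iff_inf : ∀ {k : ℕ} {b : Bool} {t : ℕ} {φ ψ : L.BoundedFormula Empty t},
    IsSigmaPi b k φ → IsSigmaPi b k ψ → ∃ χ, IsSigmaPi b k χ ∧ χ ⇔[∅] φ ⊓ ψ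
  | 0, _, _, φ, ψ, hφ, hψ => ⟨φ ⊓ ψ, hφ.inf hψ, Theory.Iff.refl _⟩
  | _ + 1, b, t, _, _, ⟨m₁, φ, hφ, rfl⟩, ⟨m₂, ψ, hψ, rfl⟩ => by
    -- `φ(x̄, ȳ₁)` and `ψ(x̄, ȳ₂)`, both read in the context `(x̄, ȳ₁, ȳ₂)`
    obtain ⟨χ, hχ, hχφψ⟩ :=
      (hφ.liftAt m₂ (t + m₁)).exists_iff_inf ((hψ.liftAt m₁ t).castLE (by omega))
    refine ⟨cond b (exsN m₁ (exsN m₂ χ)) (allsN m₁ (allsN m₂ χ)), ?_, fun M v xs => ?_⟩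
    · cases b
      exacts [isSigmaPi_allsN ⟨m₂, χ, hχ, rfl⟩, isSigmaPi_exsN ⟨m₂, χ, hχ, rfl⟩]
    have key (a₁ : Fin m₁ → M) (a₂ : Fin m₂ → M) :
        χ.Realize v (Fin.append (Fin.append xs a₁) a₂) ↔
          φ.Realize v (Fin.append xs a₁) ∧ ψ.Realize v (Fin.append xs a₂) := by
      rw [hχφψ.realize_bd_iff, BoundedFormula.realize_inf,
        BoundedFormula.realize_liftAt le_rfl, BoundedFormula.realize_castLE_of_eq (by omega),
        BoundedFormula.realize_liftAt (by omega)]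
      congr! 2
      · funext i
        simp
      · funext i
        refine Fin.addCases (fun j => ?_) (fun j => ?_) i
        · have : Fin.cast (by omega) (Fin.castAdd m₁ (Fin.castAdd m₂ j)) =
              Fin.castAdd m₂ (Fin.castAdd m₁ j) := Fin.ext rfl
          simp [this]
        · have : Fin.cast (by omega) (Fin.addNat (Fin.natAdd t j) m₁) =
              Fin.natAdd (t + m₁) j := Fin.ext (by simp; omega)
          simp [this]
    cases b <;> simp [BoundedFormula.realize_iff, realize_exsN, realize_allsN, key, forall_and]

end Hierarchy

section Facts

variable (L) in
structure FormulaAt (N : Type*) where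
  arity : ℕ
  formula : L.BoundedFormula Empty arity
  args : Fin arity → N

variable {N : Type*}

namespace FormulaAt

def Holds (d : FormulaAt L N) {M : Type*} [L.Structure M] (g : N → M) : Prop :=
  d.formula.Realize default (g ∘ d.args)

def toFormula (d : FormulaAt L N) : L.Formula N :=
  d.formula.toFormula.relabel (Sum.elim Empty.elim d.args)

theorem realize_toFormula {M : Type*} [L.Structure M] (d : FormulaAt L N)
    (v : N → M) : d.toFormula.Realize v ↔ d.Holds v := by
  rw [toFormula, Formula.realize_relabel, BoundedFormula.realize_toFormula,
    Holds, Unique.eq_default (_ ∘ Sum.inl)]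
  rfl

theorem exists_holds_iff_and {b : Bool} {k : ℕ} {d₁ d₂ : FormulaAt L N}
    (h₁ : IsSigmaPi b k d₁.formula) (h₂ : IsSigmaPi b k d₂.formula) :
    ∃ d : FormulaAt L N, IsSigmaPi b k d.formula ∧
      ∀ (M : Type*) [L.Structure M] [Nonempty M] (g : N → M),
        d.Holds g ↔ d₁.Holds g ∧ d₂.Holds g := by
  obtain ⟨r₁, φ₁, a₁⟩ := d₁
  obtain ⟨r₂, φ₂, a₂⟩ := d₂
  -- `φ₁` reads the first `r₁` variables and `φ₂` the last `r₂`
  obtain ⟨χ, hχ, hχφ⟩ :=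
    (h₁.liftAt r₂ r₁).exists_iff_inf ((h₂.liftAt r₁ 0).castLE (Nat.add_comm r₂ r₁).le)
  refine ⟨⟨r₁ + r₂, χ, Fin.append a₁ a₂⟩, hχ, fun M _ _ g => ?_⟩
  simp only [Holds]
  rw [hχφ.realize_bd_iff, BoundedFormula.realize_inf,
    BoundedFormula.realize_liftAt le_rfl, BoundedFormula.realize_castLE_of_eq (Nat.add_comm r₂ r₁),
    BoundedFormula.realize_liftAt (Nat.zero_le _)]
  congr! 2
  · funext i
    simp
  · funext i
    have : Fin.cast (Nat.add_comm r₂ r₁) (Fin.addNat i r₁) = Fin.natAdd r₁ i :=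
      Fin.ext (Nat.add_comm _ _)
    simp [this]

theorem exists_holds_iff_forall {b : Bool} {k : ℕ} (s : Finset (FormulaAt L N))
    (hs : ∀ d ∈ s, IsSigmaPi b k d.formula) :
    ∃ D : FormulaAt L N, IsSigmaPi b k D.formula ∧
      ∀ (M : Type*) [L.Structure M] [Nonempty M] (g : N → M),
        D.Holds g ↔ ∀ d ∈ s, d.Holds g := by
  classical
  induction s using Finset.induction_on with
  | empty =>
    exact ⟨⟨0, ⊤, Fin.elim0⟩, .of_isQF b BoundedFormula.IsQF.top, fun M _ _ g => by simp [Holds]⟩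
  | insert d s _ ih =>
    obtain ⟨D, hD, hDs⟩ := ih fun d' hd' => hs d' (Finset.mem_insert_of_mem hd')
    obtain ⟨D', hD', hD'D⟩ := exists_holds_iff_and (hs d (Finset.mem_insert_self d s)) hD
    exact ⟨D', hD', fun M _ _ g => by rw [hD'D M g, hDs M g, Finset.forall_mem_insert]⟩

end FormulaAt

variable (L) in
def sigmaPiFacts (n : ℕ) (N : Type*) [L.Structure N] : Set (FormulaAt L N) :=
  {d | (∃ b, IsSigmaPi b n d.formula) ∧ d.Holds id}

end Facts

section Equalities

open BoundedFormula

theorem isQF_iInf {α β : Type*} {r : ℕ} [Finite β] {f : β → L.BoundedFormula α r}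
    (hf : ∀ i, (f i).IsQF) : (BoundedFormula.iInf f).IsQF := by
  let _ := Fintype.ofFinite β
  rw [BoundedFormula.iInf]
  induction (Finset.univ : Finset β).toList with
  | nil => exact IsQF.top
  | cons i l ih => exact (hf i).inf ih

noncomputable def equalities {α N : Type*} {r : ℕ} (a : Fin r → N) : L.BoundedFormula α r :=
  BoundedFormula.iInf fun p : {p : Fin r × Fin r // a p.1 = a p.2} =>
    (Term.var (Sum.inr p.1.1)).bdEqual (Term.var (Sum.inr p.1.2))

theorem isQF_equalities {α N : Type*} {r : ℕ} (a : Fin r → N) :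
    (equalities (L := L) (α := α) a).IsQF :=
  isQF_iInf fun _ => (IsAtomic.equal _ _).isQF

theorem realize_equalities {α N M : Type*} [L.Structure M] {r : ℕ} (a : Fin r → N)
    (v : α → M) (xs : Fin r → M) :
    (equalities (L := L) a).Realize v xs ↔ Function.FactorsThrough xs a := by
  simp [equalities, realize_iInf, Function.FactorsThrough]

end Equalities

theorem exists_map_holds_of_sigmaSucc {n : ℕ} {N P : Type w} [L.Structure N] [L.Structure P]
    [Nonempty N] [Nonempty P] (hNP : ∀ σ : L.Sentence, IsSigmaPi true (n + 1) σ → N ⊨ σ → P ⊨ σ)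
    (s : Finset (FormulaAt L N)) (hs : ∀ d ∈ s, IsSigmaPi true (n + 1) d.formula ∧ d.Holds id) :
    ∃ g : N → P, ∀ d ∈ s, d.Holds g := by
  obtain ⟨D, hD, hDs⟩ := FormulaAt.exists_holds_iff_forall s fun d hd => (hs d hd).1
  -- with the equalities among the `D.args`, the witnesses found in `P` come from a map `N → P`
  obtain ⟨χ, hχ, hχD⟩ := hD.exists_iff_inf (.of_isQF true (isQF_equalities D.args))
  have hNχ : χ.Realize default D.args := by
    rw [hχD.realize_bd_iff, BoundedFormula.realize_inf, realize_equalities]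
    exact ⟨(hDs N id).2 fun d hd => (hs d hd).2, .rfl⟩
  obtain ⟨xs, hxs⟩ := (realize_exsN_sentence χ).1 <|
    hNP _ (isSigmaPi_exsN (hχ.castLE _)) <| (realize_exsN_sentence χ).2 ⟨_, hNχ⟩
  rw [hχD.realize_bd_iff, BoundedFormula.realize_inf, realize_equalities] at hxs
  obtain ⟨g, rfl⟩ := (Function.factorsThrough_iff _).1 hxs.2
  exact ⟨g, (hDs P g).1 hxs.1⟩

section Elementary

variable {n : ℕ} {M N : Type*} [L.Structure M] [L.Structure N]

theorem SigmaNElementary.realize_iff [Nonempty M] {f : M ↪[L] N} (hf : SigmaNElementary n f)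
    {b : Bool} {r : ℕ} {φ : L.BoundedFormula Empty r} (hφ : IsSigmaPi b n φ) (a : Fin r → M) :
    φ.Realize default (f ∘ a) ↔ φ.Realize default a := by
  have : Nonempty N := .map f ‹_›
  rw [Subsingleton.elim (default : Empty → N) (fun x => x.elim),
    Subsingleton.elim (default : Empty → M) (fun x => x.elim)]
  cases b
  · obtain ⟨ψ, hψ, hψφ⟩ := hφ.exists_iff_not
    simpa [hψφ.realize_bd_iff, not_iff_not] using hf r ψ hψ a
  · exact hf r φ hφ a

theorem SigmaNElementary.realize_sentence [Nonempty M] {f : M ↪[L] N}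
    (hf : SigmaNElementary n f) {σ : L.Sentence} (hσ : IsSigmaPi true (n + 1) σ) (h : M ⊨ σ) :
    N ⊨ σ := by
  obtain ⟨m, ψ, hψ, rfl⟩ := hσ
  simp only [cond_true, Sentence.Realize, Formula.Realize, realize_exsN] at h ⊢
  obtain ⟨a, ha⟩ := h
  refine ⟨f ∘ a, ?_⟩
  rwa [Fin.append_left_nil _ _ rfl, Function.comp_assoc, hf.realize_iff hψ,
    ← Fin.append_left_nil default a rfl]

def embeddingOfRealizeAtomic (g : M → N)
    (hg : ∀ {r : ℕ} (φ : L.BoundedFormula Empty r), φ.IsAtomic →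
      ∀ a : Fin r → M, φ.Realize default (g ∘ a) ↔ φ.Realize default a) :
    M ↪[L] N where
  toFun := g
  inj' x y hxy := by
    simpa using (hg _ (.equal (Term.var (Sum.inr 0)) (Term.var (Sum.inr 1))) ![x, y]).1
      (by simpa using hxy)
  map_fun' {k} F x := by
    simpa [eq_comm, Function.comp_def] using
      (hg _ (.equal (Term.func F fun i => Term.var (Sum.inr i.castSucc))
        (Term.var (Sum.inr (Fin.last k)))) (Fin.snoc x (Structure.funMap F x))).2
  map_rel' R x := by
    simpa [Function.comp_def] using hg _ (.rel R fun i => Term.var (Sum.inr i)) x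

theorem exists_sigmaNElementary_of_holds [Nonempty M] (g : M → N)
    (hg : ∀ d ∈ sigmaPiFacts L n M, d.Holds g) :
    ∃ f : M ↪[L] N, ⇑f = g ∧ SigmaNElementary n f := by
  have : Nonempty N := .map g ‹_›
  have realize_iff {r : ℕ} {φ : L.BoundedFormula Empty r} (hφ : IsSigmaPi true n φ)
      (a : Fin r → M) : φ.Realize default (g ∘ a) ↔ φ.Realize default a := by
    refine ⟨fun h => by_contra fun h' => ?_, fun h => hg ⟨r, φ, a⟩ ⟨⟨true, hφ⟩, h⟩⟩
    obtain ⟨ψ, hψ, hψφ⟩ := hφ.exists_iff_not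
    have := hg ⟨r, ψ, a⟩ ⟨⟨false, hψ⟩, by simpa [FormulaAt.Holds, hψφ.realize_bd_iff]⟩
    simp only [FormulaAt.Holds, hψφ.realize_bd_iff, BoundedFormula.realize_not] at this
    exact this h
  refine ⟨embeddingOfRealizeAtomic g fun φ hφ => realize_iff (.of_isQF true hφ.isQF), rfl,
    fun r φ hφ a => ?_⟩
  rw [Subsingleton.elim (fun x => x.elim : Empty → N) default,
    Subsingleton.elim (fun x => x.elim : Empty → M) default]
  exact realize_iff hφ a

end Elementary

section Amalgamation

variable (L) in
def amalgamationTheory (n : ℕ) (N P : Type*) [L.Structure N] [L.Structure P] :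
    L[[P ⊕ N]].Theory :=
  (L.lhomWithConstantsMap Sum.inl).onTheory (L.elementaryDiagram P) ∪
    (fun d : FormulaAt L N => Formula.equivSentence (d.toFormula.relabel Sum.inr)) ''
      sigmaPiFacts L n N

variable {n : ℕ} {N P : Type w} [L.Structure N] [L.Structure P]

theorem isSatisfiable_amalgamationTheory [Nonempty N] [Nonempty P]
    (hNP : ∀ σ : L.Sentence, IsSigmaPi true (n + 1) σ → N ⊨ σ → P ⊨ σ) :
    (amalgamationTheory L n N P).IsSatisfiable := by
  classical
  rw [Theory.isSatisfiable_iff_isFinitelySatisfiable]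
  intro T₀ hT₀
  set DT := (L.lhomWithConstantsMap (Sum.inl : P → P ⊕ N)).onTheory (L.elementaryDiagram P)
  obtain ⟨s, hs, hsT₀⟩ := Finset.subset_set_image_iff.1 fun φ (hφ : φ ∈ T₀.filter (· ∉ DT)) =>
    (hT₀ (Finset.mem_filter.1 hφ).1).resolve_left (Finset.mem_filter.1 hφ).2
  obtain ⟨g, hg⟩ := exists_map_holds_of_sigmaSucc hNP s fun d hd =>
    ⟨(hs hd).1.elim fun _ h => h.sigma_succ, (hs hd).2⟩
  let : (constantsOn (P ⊕ N)).Structure P := constantsOn.structure (Sum.elim id g)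
  have : (LHom.constantsOnMap (Sum.inl : P → P ⊕ N)).IsExpansionOn P :=
    constantsOnMap_isExpansionOn (fα := id) rfl
  have : (L.lhomWithConstantsMap (Sum.inl : P → P ⊕ N)).IsExpansionOn P :=
    LHom.sumMap_isExpansionOn (LHom.id L) _ P
  have : P ⊨ DT := (LHom.onTheory_model _ _).2 inferInstance
  have : P ⊨ (T₀ : L[[P ⊕ N]].Theory) := by
    refine (Theory.model_iff _).2 fun φ hφ => ?_
    by_cases hDT : φ ∈ DT
    · exact DT.realize_sentence_of_mem hDT
    obtain ⟨d, hd, rfl⟩ := Finset.mem_image.1 (hsT₀ ▸ Finset.mem_filter.2 ⟨hφ, hDT⟩)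
    rw [Formula.realize_equivSentence, Formula.realize_relabel, FormulaAt.realize_toFormula]
    exact hg d hd
  exact Theory.Model.isSatisfiable P

theorem elemExtSigmaWitness_of_model [Nonempty N] (R : (amalgamationTheory L n N P).ModelType) :
    ElemExtSigmaWitness n N P R ((L.lhomWithConstants (P ⊕ N)).reduct R) := by
  let _ : L.Structure R := (L.lhomWithConstants (P ⊕ N)).reduct R
  have : (L.lhomWithConstants (P ⊕ N)).IsExpansionOn R := LHom.isExpansionOn_reduct _ R
  let _ : L[[P]].Structure R := (L.lhomWithConstantsMap (Sum.inl : P → P ⊕ N)).reduct R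
  have : (L.lhomWithConstants P).IsExpansionOn R := ⟨fun _ _ => rfl, fun _ _ => rfl⟩
  have : R ⊨ L.elementaryDiagram P :=
    (LHom.onTheory_model _ _).1 (Theory.Model.mono R.is_model Set.subset_union_left)
  obtain ⟨f, -, hf⟩ := exists_sigmaNElementary_of_holds (fun x => (L.con (Sum.inr x : P ⊕ N) : R))
    fun d hd => by
      have := (amalgamationTheory L n N P).realize_sentence_of_mem (M := R)
        (Set.mem_union_right _ ⟨d, hd, rfl⟩)
      rwa [Formula.realize_equivSentence, Formula.realize_relabel,
        FormulaAt.realize_toFormula] at this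
  exact ⟨⟨ElementaryEmbedding.ofModelsElementaryDiagram L P R⟩, f, hf⟩

end Amalgamation

theorem sigmaSucc_consequences_iff_elemExt_sigmaEmbedding_general
    (n : ℕ) (N P : Type w) [L.Structure N] [L.Structure P] [Nonempty N] [Nonempty P] :
    (∀ σ : L.Sentence, IsSigmaPi true (n + 1) σ → N ⊨ σ → P ⊨ σ) ↔
      ∃ (R : Type (max u v w)) (iR : L.Structure R),
        ElemExtSigmaWitness n N P R iR := by
  refine ⟨fun hNP => ?_, ?_⟩
  · obtain ⟨R⟩ := isSatisfiable_amalgamationTheory hNP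
    exact ⟨R, _, elemExtSigmaWitness_of_model R⟩
  · rintro ⟨R, _, ⟨e⟩, f, hf⟩ σ hσ hN
    exact (e.map_sentence σ).2 (hf.realize_sentence hσ hN)

/-- **generalized existential amalgamation.** Over a finite
vocabulary, every Σ⁰_{n+1} sentence true in `N` is true in `P` iff there
exist an elementary extension `R` of `P` and an embedding `f` of `N` into `R`
whose image is a Σ⁰_n-elementary substructure of `R` (i.e. for every Σ⁰_n
formula `φ(x̄)` and tuple `ā` from `N`, `R ⊨ φ(f(ā))` iff `N ⊨ φ(ā)`). -/
theorem sigmaSucc_consequences_iff_elemExt_sigmaEmbedding [Finite L.Symbols]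
    (n : ℕ) (N P : Type w) [L.Structure N] [L.Structure P] [Nonempty N] [Nonempty P] :
    (∀ σ : L.Sentence, IsSigmaPi true (n + 1) σ → N ⊨ σ → P ⊨ σ) ↔
      ∃ (R : Type (max u v w)) (iR : L.Structure R),
        ElemExtSigmaWitness n N P R iR :=
  sigmaSucc_consequences_iff_elemExt_sigmaEmbedding_general n N P

end LTGen
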